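/- arXiv:2001.01008 — 8 statements merged into one kernel-verified Lean document; each statement's English description precedes it below -/
import Mathlib

section
/- For any positive integers d, u, z, and n with k = d + u ≤ n, there exists a t × n binary matrix that is (n, d, u; z]-disjunct with t = z · (k/u)^u · (k/d)^d · [1 + k(1 + ln(n/k + 1))] rows, where a t × n binary matrix M is (n, d, u; z]-disjunct if for any two disjoint subsets S₁, S₂ ⊂ [n] with |S₁| = d and |S₂| = u, there exist at least z rows in which all columns in S₂ have a 1 while all columns in S₁ have a 0. -/
/-!
Label every column independently and uniformly by an element of `Fin (d + u)` and put a `1`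
exactly in the columns labelled below `u`. Such a row separates a fixed disjoint pair
`(S₁, S₂)` with `|S₁| = d`, `|S₂| = u` with probability `q = uᵘ dᵈ / (d + u)^(d + u)`.
Choosing rows greedily, each separating at least a `q`-fraction of the pairs not yet separated,
leaves at most `N e^{-qm}` of the `N ≤ C(n, d) C(n, u)` pairs after `m` rows, and every leftover
pair gets a row of its own. For `m = ⌊(d + u)(1 + log (n / (d + u) + 1)) / q⌋` Stirling's bound
`d! ≥ 2 (d / e)ᵈ` leaves at most `1 / q` pairs, and stacking `z` copies of the resulting matrix
gives `z` separating rows.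
-/

open Finset Real
open scoped Nat

/-- A `t × n` binary matrix `M` is `(n, d, u; z]`-disjunct if for any two disjoint
subsets `S₁, S₂ ⊆ [n]` with `|S₁| = d` and `|S₂| = u`, there exist at least `z` rows
in which all columns of `S₂` have a `1` while all columns of `S₁` have a `0`. -/
def IsDisjunct {t n : ℕ} (M : Fin t → Fin n → Bool) (d u z : ℕ) : Prop :=
  ∀ S₁ S₂ : Finset (Fin n), Disjoint S₁ S₂ → S₁.card = d → S₂.card = u →
    z ≤ (Finset.univ.filter
      (fun i => (∀ j ∈ S₂, M i j = true) ∧ (∀ j ∈ S₁, M i j = false))).card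

theorem card_filter_forall_mem_of_disjoint {α β : Type*} [Fintype α] [DecidableEq α]
    [Fintype β] [DecidableEq β] {S₁ S₂ : Finset α} (h : Disjoint S₁ S₂) (B₁ B₂ : Finset β) :
    #{w : α → β | (∀ j ∈ S₂, w j ∈ B₂) ∧ ∀ j ∈ S₁, w j ∈ B₁} =
      #B₂ ^ #S₂ * #B₁ ^ #S₁ * Fintype.card β ^ (Fintype.card α - #S₂ - #S₁) := by
  have hpi : ({w : α → β | (∀ j ∈ S₂, w j ∈ B₂) ∧ ∀ j ∈ S₁, w j ∈ B₁} : Finset _) =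
      Fintype.piFinset
        (S₂.piecewise (fun _ => B₂) (S₁.piecewise (fun _ => B₁) fun _ => univ)) := by
    ext w
    simp only [mem_filter, mem_univ, true_and, Fintype.mem_piFinset]
    constructor
    · rintro ⟨h₂, h₁⟩ j
      by_cases hj₂ : j ∈ S₂
      · simpa [hj₂] using h₂ j hj₂
      by_cases hj₁ : j ∈ S₁ <;> simp [hj₂, hj₁, h₁]
    · intro hw
      refine ⟨fun j hj => by simpa [hj] using hw j, fun j hj => ?_⟩
      simpa [hj, disjoint_left.mp h hj] using hw j
  have hS₁ : S₂ᶜ ∩ S₁ = S₁ := inter_eq_right.mpr (subset_compl_iff_disjoint_left.mpr h.symm)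
  rw [hpi, Fintype.card_piFinset, ← prod_mul_prod_compl S₂, ← prod_inter_mul_prod_sdiff S₂ᶜ S₁,
    hS₁, prod_eq_pow_card fun j hj => by rw [piecewise_eq_of_mem _ _ _ hj],
    prod_eq_pow_card fun j hj => by
      rw [piecewise_eq_of_notMem _ _ _ (disjoint_left.mp h hj), piecewise_eq_of_mem _ _ _ hj],
    prod_eq_pow_card fun j hj => by
      rw [mem_sdiff, mem_compl] at hj
      rw [piecewise_eq_of_notMem _ _ _ hj.1, piecewise_eq_of_notMem _ _ _ hj.2, card_univ],
    card_sdiff_of_subset (subset_compl_iff_disjoint_left.mpr h.symm), card_compl, mul_assoc]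

theorem card_filter_snd_finProdFinEquiv {c t : ℕ} (P : Fin t → Prop) [DecidablePred P] :
    #{i : Fin (c * t) | P (finProdFinEquiv.symm i).2} = c * #{i | P i} := by
  rw [← card_map finProdFinEquiv.symm.toEmbedding, map_filter, map_univ_equiv]
  simp only [Function.comp_def, Equiv.symm_symm, Equiv.symm_apply_apply]
  rw [← univ_product_univ, filter_product_right, card_product, card_univ, Fintype.card_fin]

theorem IsDisjunct.replicate {t n d u z : ℕ} {M : Fin t → Fin n → Bool} (h : IsDisjunct M d u z)
    (c : ℕ) : IsDisjunct (fun i : Fin (c * t) => M (finProdFinEquiv.symm i).2) d u (c * z) :=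
  fun S₁ S₂ hS h₁ h₂ => by
    rw [card_filter_snd_finProdFinEquiv
      (fun i => (∀ j ∈ S₂, M i j = true) ∧ ∀ j ∈ S₁, M i j = false)]
    exact Nat.mul_le_mul_left c (h S₁ S₂ hS h₁ h₂)

section GreedyCover

theorem exists_rows_cover_of_forall_exists {Ω ι : Type*} (good : Ω → ι → Prop) {S : Finset ι}
    (hS : ∀ p ∈ S, ∃ ω, good ω p) :
    ∃ rows : Fin #S → Ω, ∀ p ∈ S, ∃ i, good (rows i) p := by
  choose f hf using hS
  exact ⟨fun i => f _ (S.equivFin.symm i).2,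
    fun p hp => ⟨S.equivFin ⟨p, hp⟩, by simpa using hf p hp⟩⟩

variable {Ω ι : Type*} [Fintype Ω] (good : Ω → ι → Prop) [∀ ω p, Decidable (good ω p)]

theorem exists_mul_card_le_card_filter [Nonempty Ω] {q : ℝ} {S : Finset ι}
    (hS : ∀ p ∈ S, q * Fintype.card Ω ≤ #{ω | good ω p}) :
    ∃ ω, q * #S ≤ #{p ∈ S | good ω p} := by
  have hsum : ∑ ω, (#{p ∈ S | good ω p} : ℝ) = ∑ p ∈ S, (#{ω | good ω p} : ℝ) := by
    simp only [card_filter]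
    push_cast
    exact sum_comm
  have hle : ∑ _ω : Ω, q * #S ≤ ∑ ω, (#{p ∈ S | good ω p} : ℝ) := by
    rw [hsum]
    calc ∑ _ω : Ω, q * #S = ∑ _p ∈ S, q * Fintype.card Ω := by
          simp only [sum_const, card_univ, nsmul_eq_mul]; ring
      _ ≤ _ := sum_le_sum hS
  obtain ⟨ω, -, hω⟩ := exists_le_of_sum_le univ_nonempty hle
  exact ⟨ω, hω⟩

theorem exists_rows_card_uncovered_le [Nonempty Ω] {q : ℝ} (m : ℕ) (S : Finset ι)
    (hS : ∀ p ∈ S, q * Fintype.card Ω ≤ #{ω | good ω p}) :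
    ∃ rows : Fin m → Ω, (#{p ∈ S | ∀ i, ¬good (rows i) p} : ℝ) ≤ #S * exp (-(q * m)) := by
  induction m generalizing S with
  | zero => exact ⟨Fin.elim0, by simp⟩
  | succ m ih =>
    obtain ⟨ω, hω⟩ := exists_mul_card_le_card_filter good hS
    obtain ⟨rows, hrows⟩ := ih {p ∈ S | ¬good ω p} fun p hp => hS p (mem_filter.1 hp).1
    refine ⟨Fin.cons ω rows, ?_⟩
    have huncovered : {p ∈ S | ∀ i, ¬good ((Fin.cons ω rows : Fin (m + 1) → Ω) i) p} =
        {p ∈ {p ∈ S | ¬good ω p} | ∀ i, ¬good (rows i) p} := by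
      simp only [Fin.forall_fin_succ, Fin.cons_zero, Fin.cons_succ, filter_filter]
    have hmiss : (#{p ∈ S | ¬good ω p} : ℝ) ≤ #S * (1 - q) := by
      have := card_filter_add_card_filter_not (s := S) (good ω)
      rw [mul_one_sub]
      have hreal : (#{p ∈ S | good ω p} : ℝ) + #{p ∈ S | ¬good ω p} = #S := by exact_mod_cast this
      linarith
    rw [huncovered]
    calc _ ≤ (#{p ∈ S | ¬good ω p} : ℝ) * exp (-(q * m)) := hrows
      _ ≤ #S * (1 - q) * exp (-(q * m)) := by gcongr
      _ ≤ #S * exp (-q) * exp (-(q * m)) := by gcongr; exact one_sub_le_exp_neg q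
      _ = #S * exp (-(q * ↑(m + 1))) := by rw [mul_assoc, ← exp_add]; push_cast; ring_nf

theorem exists_rows_cover [Nonempty Ω] {q : ℝ} (hq : 0 < q) (S : Finset ι)
    (hS : ∀ p ∈ S, q * Fintype.card Ω ≤ #{ω | good ω p}) (m : ℕ) :
    ∃ (r : ℕ) (rows : Fin r → Ω), (r : ℝ) ≤ m + #S * exp (-(q * m)) ∧
      ∀ p ∈ S, ∃ i, good (rows i) p := by
  obtain ⟨rows₁, hrows₁⟩ := exists_rows_card_uncovered_le good m S hS
  have hex : ∀ p ∈ {p ∈ S | ∀ i, ¬good (rows₁ i) p}, ∃ ω, good ω p := fun p hp => by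
    have hpos : 0 < (#{ω | good ω p} : ℝ) :=
      (mul_pos hq (by exact_mod_cast Fintype.card_pos)).trans_le (hS p (mem_filter.1 hp).1)
    obtain ⟨ω, hω⟩ := card_pos.1 (by exact_mod_cast hpos)
    exact ⟨ω, (mem_filter.1 hω).2⟩
  obtain ⟨rows₂, hrows₂⟩ := exists_rows_cover_of_forall_exists good hex
  refine ⟨_, Fin.append rows₁ rows₂, by push_cast; linarith, fun p hp => ?_⟩
  by_cases hcov : ∃ i, good (rows₁ i) p
  · obtain ⟨i, hi⟩ := hcov
    exact ⟨Fin.castAdd _ i, by simpa using hi⟩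
  · obtain ⟨i, hi⟩ := hrows₂ p (mem_filter.2 ⟨hp, not_exists.1 hcov⟩)
    exact ⟨Fin.natAdd _ i, by simpa using hi⟩

end GreedyCover

theorem two_mul_pow_le_exp_mul_factorial {d : ℕ} (hd : d ≠ 0) :
    2 * (d : ℝ) ^ d ≤ exp d * d ! := by
  have hstirling := Stirling.le_factorial_stirling d
  have h2 : 2 ≤ √(2 * π * d) := by
    have : (1 : ℝ) ≤ d := by exact_mod_cast Nat.one_le_iff_ne_zero.2 hd
    exact (le_sqrt zero_le_two (by positivity)).2 (by nlinarith [pi_gt_three])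
  rw [div_pow, exp_one_pow] at hstirling
  have hexp := exp_pos (d : ℝ)
  calc 2 * (d : ℝ) ^ d ≤ √(2 * π * d) * d ^ d := by gcongr
    _ = exp d * (√(2 * π * d) * (d ^ d / exp d)) := by field_simp
    _ ≤ exp d * d ! := by gcongr

theorem choose_mul_pow_le {n d : ℕ} (hd : d ≠ 0) :
    (n.choose d : ℝ) * d ^ d ≤ n ^ d * exp d / 2 := by
  have hfac : (0 : ℝ) < d ! := by exact_mod_cast d.factorial_pos
  calc (n.choose d : ℝ) * d ^ d ≤ n ^ d / d ! * d ^ d := by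
        gcongr; exact Nat.choose_le_pow_div d n
    _ ≤ n ^ d * exp d / 2 := by
        rw [div_mul_eq_mul_div, div_le_div_iff₀ hfac two_pos]
        nlinarith [two_mul_pow_le_exp_mul_factorial hd,
          pow_nonneg (Nat.cast_nonneg (α := ℝ) n) d]

theorem pow_mul_exp_mul_one_add_log {x : ℝ} (hx : 0 ≤ x) {k : ℕ} (hk : k ≠ 0) :
    (k : ℝ) ^ k * exp (k * (1 + log (x / k + 1))) = (x + k) ^ k * exp k := by
  have hkpos : (0 : ℝ) < k := by exact_mod_cast Nat.pos_of_ne_zero hk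
  rw [mul_one_add, exp_add, exp_nat_mul, exp_log (by positivity), ← mul_assoc, mul_right_comm,
    ← mul_pow, mul_add, mul_div_cancel₀ _ hkpos.ne', mul_one]

theorem sub_one_le_mul_floor_div {q c : ℝ} (hq : 0 < q) (hq1 : q ≤ 1) :
    c - 1 ≤ q * ⌊c / q⌋₊ := by
  have := Nat.sub_one_lt_floor (c / q)
  have h := mul_le_mul_of_nonneg_left this.le hq.le
  rw [mul_sub, mul_div_cancel₀ _ hq.ne', mul_one] at h
  linarith

def disjointPairs (n d u : ℕ) : Finset (Finset (Fin n) × Finset (Fin n)) :=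
  {p ∈ powersetCard d univ ×ˢ powersetCard u univ | Disjoint p.1 p.2}

theorem mem_disjointPairs {n d u : ℕ} {S₁ S₂ : Finset (Fin n)} :
    (S₁, S₂) ∈ disjointPairs n d u ↔ Disjoint S₁ S₂ ∧ #S₁ = d ∧ #S₂ = u := by
  simp [disjointPairs, mem_powersetCard, and_comm]

theorem card_disjointPairs_le (n d u : ℕ) :
    #(disjointPairs n d u) ≤ n.choose d * n.choose u := by
  unfold disjointPairs
  exact (card_filter_le _ _).trans_eq (by simp [card_powersetCard])

theorem card_disjointPairs_mul_le {n d u : ℕ} (hd : d ≠ 0) (hu : u ≠ 0) :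
    (#(disjointPairs n d u) : ℝ) * (u ^ u * d ^ d) ≤ n ^ (d + u) * exp (d + u) / 4 :=
  calc (#(disjointPairs n d u) : ℝ) * (u ^ u * d ^ d)
      ≤ (n.choose d * d ^ d) * (n.choose u * u ^ u) := by
        rw [mul_mul_mul_comm, mul_comm ((u : ℝ) ^ u)]
        gcongr
        exact_mod_cast card_disjointPairs_le n d u
    _ ≤ (n ^ d * exp d / 2) * (n ^ u * exp u / 2) := by
        gcongr
        exacts [choose_mul_pow_le hd, choose_mul_pow_le hu]
    _ = n ^ (d + u) * exp (d + u) / 4 := by rw [pow_add, exp_add]; ring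

theorem card_disjointPairs_mul_le_exp {n d u : ℕ} (hd : d ≠ 0) (hu : u ≠ 0) :
    (#(disjointPairs n d u) : ℝ) * (u ^ u * d ^ d / ((d : ℝ) + u) ^ (d + u)) ≤
      exp (((d : ℝ) + u) * (1 + log (n / ((d : ℝ) + u) + 1)) - 1) := by
  have hk : (0 : ℝ) < d + u := by positivity
  have he : exp 1 ≤ 4 := by linarith [exp_one_lt_d9]
  have hn : (n : ℝ) ^ (d + u) ≤ (n + (d + u)) ^ (d + u) := by gcongr; linarith
  have hpow := pow_mul_exp_mul_one_add_log (x := n) (Nat.cast_nonneg n) (k := d + u) (by omega)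
  push_cast at hpow
  calc (#(disjointPairs n d u) : ℝ) * (u ^ u * d ^ d / ((d : ℝ) + u) ^ (d + u))
      = #(disjointPairs n d u) * (u ^ u * d ^ d) / ((d : ℝ) + u) ^ (d + u) := by ring
    _ ≤ n ^ (d + u) * exp ((d : ℝ) + u) / 4 / ((d : ℝ) + u) ^ (d + u) := by
        gcongr; exact card_disjointPairs_mul_le hd hu
    _ ≤ (n + (d + u)) ^ (d + u) * exp ((d : ℝ) + u) / exp 1 / ((d : ℝ) + u) ^ (d + u) := by
        gcongr
    _ = _ := by
        rw [exp_sub, ← hpow]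
        field_simp

theorem card_labellings_separating {n d u : ℕ} {S₁ S₂ : Finset (Fin n)} (h : Disjoint S₁ S₂)
    (h₁ : #S₁ = d) (h₂ : #S₂ = u) :
    #{w : Fin n → Fin (d + u) |
        (∀ j ∈ S₂, decide ((w j : ℕ) < u) = true) ∧ ∀ j ∈ S₁, decide ((w j : ℕ) < u) = false} =
      (u ^ u * d ^ d / (d + u) ^ (d + u) : ℝ) * Fintype.card (Fin n → Fin (d + u)) := by
  have hcount :=
    card_filter_forall_mem_of_disjoint h {x : Fin (d + u) | ¬(x : ℕ) < u} {x | (x : ℕ) < u}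
  have hlow : #{x : Fin (d + u) | (x : ℕ) < u} = u := by rw [Fin.card_filter_val_lt]; omega
  have hhigh : #{x : Fin (d + u) | ¬(x : ℕ) < u} = d := by
    rw [filter_not, card_sdiff_of_subset (filter_subset _ _), hlow, card_univ, Fintype.card_fin]
    omega
  have hn : u + d ≤ n := by
    have := card_le_univ (S₁ ∪ S₂)
    rw [card_union_of_disjoint h, h₁, h₂, Fintype.card_fin] at this
    omega
  simp only [mem_filter, mem_univ, true_and, hlow, hhigh, h₁, h₂, Fintype.card_fin] at hcount
  simp only [decide_eq_true_eq, decide_eq_false_iff_not, Fintype.card_fun, Fintype.card_fin,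
    hcount]
  obtain ⟨m, rfl⟩ := Nat.exists_eq_add_of_le hn
  have hK : ((d : ℝ) + u) ^ (d + u) ≠ 0 := by
    by_cases hk : d + u = 0
    · simp [Nat.add_eq_zero_iff.1 hk]
    · exact pow_ne_zero _ (by exact_mod_cast hk)
  push_cast
  rw [show u + d + m - u - d = m by omega, show u + d + m = d + u + m by ring,
    pow_add ((d : ℝ) + u) (d + u) m, ← mul_assoc, div_mul_cancel₀ _ hK]

theorem exists_isDisjunct_one {n d u : ℕ} (hd : d ≠ 0) (hu : u ≠ 0) :
    ∃ (r : ℕ) (M : Fin r → Fin n → Bool), IsDisjunct M d u 1 ∧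
      (r : ℝ) ≤ (((d : ℝ) + u) / u) ^ u * (((d : ℝ) + u) / d) ^ d *
        (1 + ((d : ℝ) + u) * (1 + log ((n : ℝ) / ((d : ℝ) + u) + 1))) := by
  set k : ℝ := d + u
  set q : ℝ := u ^ u * d ^ d / k ^ (d + u) with hq
  set c : ℝ := k * (1 + log (n / k + 1))
  set m : ℕ := ⌊c / q⌋₊
  have hkpos : 0 < k := by positivity
  have hqpos : 0 < q := by positivity
  have hq_le_one : q ≤ 1 := by
    rw [div_le_one (by positivity), pow_add, mul_comm]
    gcongr <;> linarith [(d.cast_nonneg : (0 : ℝ) ≤ d), (u.cast_nonneg : (0 : ℝ) ≤ u)]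
  have hc_nonneg : 0 ≤ c := mul_nonneg hkpos.le (by
    linarith [log_nonneg (le_add_of_nonneg_left (by positivity : (0 : ℝ) ≤ n / k))])
  have hinv : 1 / q = (k / u) ^ u * (k / d) ^ d := by
    rw [hq, div_pow, div_pow, div_mul_div_comm, ← pow_add, add_comm u d, one_div_div]
  have : NeZero (d + u) := ⟨by omega⟩
  obtain ⟨r, rows, hr, hcover⟩ := exists_rows_cover
    (fun (w : Fin n → Fin (d + u)) (p : Finset (Fin n) × Finset (Fin n)) =>
      (∀ j ∈ p.2, decide ((w j : ℕ) < u) = true) ∧ ∀ j ∈ p.1, decide ((w j : ℕ) < u) = false)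
    hqpos (disjointPairs n d u)
    (fun p hp => by
      obtain ⟨h, h₁, h₂⟩ := mem_disjointPairs.1 hp
      exact (card_labellings_separating h h₁ h₂).ge) m
  refine ⟨r, fun i j => decide ((rows i j : ℕ) < u), fun S₁ S₂ h h₁ h₂ => ?_, ?_⟩
  · obtain ⟨i, hi⟩ := hcover _ (mem_disjointPairs.2 ⟨h, h₁, h₂⟩)
    exact card_pos.2 ⟨i, mem_filter.2 ⟨mem_univ _, hi⟩⟩
  have hpairs : (#(disjointPairs n d u) : ℝ) * q ≤ exp (q * m) :=
    (card_disjointPairs_mul_le_exp hd hu).trans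
      (exp_le_exp.2 (sub_one_le_mul_floor_div hqpos hq_le_one))
  have hleft : (#(disjointPairs n d u) : ℝ) * exp (-(q * m)) ≤ 1 / q := by
    rw [exp_neg, ← div_eq_mul_inv, div_le_div_iff₀ (exp_pos _) hqpos, one_mul]
    exact hpairs
  calc (r : ℝ) ≤ m + #(disjointPairs n d u) * exp (-(q * m)) := hr
    _ ≤ c / q + 1 / q := add_le_add (Nat.floor_le (div_nonneg hc_nonneg hqpos.le)) hleft
    _ = 1 / q * (1 + c) := by ring
    _ = _ := by rw [hinv]

theorem exists_disjunct_matrix_chen_general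
    (d u z n : ℕ) (hd : 0 < d) (hu : 0 < u) :
    ∃ (t : ℕ) (M : Fin t → Fin n → Bool), IsDisjunct M d u z ∧
      (t : ℝ) ≤ (z : ℝ) * (((d : ℝ) + u) / u) ^ u * (((d : ℝ) + u) / d) ^ d *
        (1 + ((d : ℝ) + u) * (1 + Real.log ((n : ℝ) / ((d : ℝ) + u) + 1))) := by
  obtain ⟨r, M, hM, hr⟩ := exists_isDisjunct_one (n := n) hd.ne' hu.ne'
  refine ⟨z * r, _, by simpa using hM.replicate z, ?_⟩
  push_cast
  rw [mul_assoc (z : ℝ), mul_assoc (z : ℝ)]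
  gcongr

theorem exists_disjunct_matrix_chen
    (d u z n : ℕ) (hd : 0 < d) (hu : 0 < u) (hz : 0 < z) (hk : d + u ≤ n) :
    ∃ (t : ℕ) (M : Fin t → Fin n → Bool), IsDisjunct M d u z ∧
      (t : ℝ) ≤ (z : ℝ) * (((d : ℝ) + u) / u) ^ u * (((d : ℝ) + u) / d) ^ d *
        (1 + ((d : ℝ) + u) * (1 + Real.log ((n : ℝ) / ((d : ℝ) + u) + 1))) :=
  exists_disjunct_matrix_chen_general d u z n hd hu
end

section
/- Let 2 ≤ u ≤ d, k = d + u ≤ n with (d+u)²/u ≤ n, and set α = k·ln(e·n/k) + u·ln(e·k/u). For any positive integer z, there exists an h × n (n, d, u; z]-disjunct matrix with h ≤ 3(1 + 4z/(3α)) · (k/u)^u · (k/d)^d · α. -/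
/-- `α = k·ln(e·n/k) + u·ln(e·k/u)` with `k = d + u`. -/
noncomputable def alphaTGT (n d u : ℕ) : ℝ :=
  ((d : ℝ) + u) * Real.log (Real.exp 1 * n / ((d : ℝ) + u)) +
    (u : ℝ) * Real.log (Real.exp 1 * ((d : ℝ) + u) / u)

/-!
Take a random `T × n` matrix whose entries are independently `1` with probability `p = u/k`.
A row is `1` on a given `u`-set and `0` on a disjoint `d`-set with probability
`q = p^u (1-p)^d = (u/k)^u (d/k)^d`. If `g` counts such rows, `e^{z-g}` is a product over the
rows, so its expectation is `e^z (1 - (1 - e⁻¹) q)^T ≤ e^{z - (1 - e⁻¹) q T}`, and by Markov's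
inequality this bounds the probability that `g ≤ z`. There are `C(n,k) C(k,u) ≤ e^α` such pairs
of sets, so for `T = ⌊(3α + 4z)/q⌋` the union bound leaves a disjunct matrix. Probabilities are
written as sums of the product weights `bernoulliWeight`.
-/

open Finset Real

theorem exists_forall_lt_one_of_sum_lt {α ι : Type*} [Fintype α] {s : Finset ι} {w : α → ℝ}
    {f : ι → α → ℝ} (hw : ∀ a, 0 ≤ w a) (hf : ∀ i ∈ s, ∀ a, 0 ≤ f i a)
    (h : ∑ i ∈ s, ∑ a, w a * f i a < ∑ a, w a) : ∃ a, ∀ i ∈ s, f i a < 1 := by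
  by_contra! hpair
  refine h.not_ge ?_
  rw [sum_comm]
  refine sum_le_sum fun a _ => ?_
  obtain ⟨i, hi, h1⟩ := hpair a
  calc w a ≤ w a * f i a := le_mul_of_one_le_right (hw a) h1
    _ ≤ ∑ j ∈ s, w a * f j a := single_le_sum (fun j hj => mul_nonneg (hw a) (hf j hj a)) hi

section Bernoulli

variable {ι : Type*} [Fintype ι]

noncomputable def bernoulliWeight (p : ℝ) (x : ι → Bool) : ℝ :=
  ∏ j, if x j then p else 1 - p

lemma bernoulliWeight_nonneg {p : ℝ} (hp0 : 0 ≤ p) (hp1 : p ≤ 1) (x : ι → Bool) :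
    0 ≤ bernoulliWeight p x :=
  prod_nonneg fun j _ => by split <;> linarith

variable [DecidableEq ι]

lemma sum_bernoulliWeight_piFinset (p : ℝ) (A : ι → Finset Bool) :
    ∑ x ∈ Fintype.piFinset A, bernoulliWeight p x = ∏ j, ∑ b ∈ A j, if b then p else 1 - p := by
  rw [prod_univ_sum]; rfl

lemma sum_bernoulliWeight (p : ℝ) : ∑ x : ι → Bool, bernoulliWeight p x = 1 := by
  have h := sum_bernoulliWeight_piFinset p fun _ : ι => univ
  rw [Fintype.piFinset_univ] at h
  simpa using h

def patternSet (S₁ S₂ : Finset ι) : Finset (ι → Bool) :=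
  {x | (∀ j ∈ S₂, x j = true) ∧ ∀ j ∈ S₁, x j = false}

lemma sum_bernoulliWeight_patternSet (p : ℝ) {S₁ S₂ : Finset ι} (h : Disjoint S₁ S₂) :
    ∑ x ∈ patternSet S₁ S₂, bernoulliWeight p x = p ^ #S₂ * (1 - p) ^ #S₁ := by
  have hpi : patternSet S₁ S₂ = Fintype.piFinset fun j =>
      if j ∈ S₂ then {true} else if j ∈ S₁ then {false} else univ := by
    ext x
    simp only [patternSet, mem_filter, mem_univ, true_and, Fintype.mem_piFinset]
    constructor
    · rintro ⟨h₂, h₁⟩ j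
      by_cases hj₂ : j ∈ S₂
      · simp [hj₂, h₂]
      · by_cases hj₁ : j ∈ S₁ <;> simp [hj₂, hj₁, h₁]
    · intro hx
      refine ⟨fun j hj => by simpa [hj] using hx j, fun j hj => ?_⟩
      simpa [hj, disjoint_left.1 h hj] using hx j
  rw [hpi, sum_bernoulliWeight_piFinset]
  calc ∏ j, ∑ b ∈ (if j ∈ S₂ then {true} else if j ∈ S₁ then {false} else univ),
        (if b then p else 1 - p)
      = ∏ j, (if j ∈ S₂ then p else 1) * (if j ∈ S₁ then 1 - p else 1) := by
        refine prod_congr rfl fun j _ => ?_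
        by_cases hj₂ : j ∈ S₂
        · simp [hj₂, disjoint_right.1 h hj₂]
        · by_cases hj₁ : j ∈ S₁ <;> simp [hj₂, hj₁]
    _ = p ^ #S₂ * (1 - p) ^ #S₁ := by
        rw [prod_mul_distrib, prod_ite_mem, prod_ite_mem, univ_inter, univ_inter, prod_const,
          prod_const]

lemma sum_prod_bernoulliWeight_mul_exp_sub_card (p z : ℝ) (T : ℕ) (G : Finset (ι → Bool)) :
    ∑ M : Fin T → ι → Bool, (∏ i, bernoulliWeight p (M i)) * exp (z - #{i | M i ∈ G})
      = exp z * (1 - (1 - exp (-1)) * ∑ x ∈ G, bernoulliWeight p x) ^ T := by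
  have hexp (M : Fin T → ι → Bool) :
      exp (z - #{i | M i ∈ G}) = exp z * ∏ i, if M i ∈ G then exp (-1) else 1 := by
    rw [prod_ite, prod_const, prod_const_one, mul_one, ← exp_nat_mul, ← exp_add]
    ring_nf
  have hrow (x : ι → Bool) : bernoulliWeight p x * (if x ∈ G then exp (-1) else 1)
      = bernoulliWeight p x - (1 - exp (-1)) * if x ∈ G then bernoulliWeight p x else 0 := by
    split_ifs <;> ring
  calc ∑ M : Fin T → ι → Bool, (∏ i, bernoulliWeight p (M i)) * exp (z - #{i | M i ∈ G})
      = exp z * ∑ M : Fin T → ι → Bool,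
          ∏ i, bernoulliWeight p (M i) * if M i ∈ G then exp (-1) else 1 := by
        simp only [hexp, mul_sum, prod_mul_distrib]
        exact sum_congr rfl fun M _ => by ring
    _ = exp z * (∑ x, bernoulliWeight p x * if x ∈ G then exp (-1) else 1) ^ T := by
        rw [Fintype.sum_pow]
    _ = exp z * (1 - (1 - exp (-1)) * ∑ x ∈ G, bernoulliWeight p x) ^ T := by
        simp only [hrow]
        rw [sum_sub_distrib, ← mul_sum, sum_ite_mem, univ_inter, sum_bernoulliWeight]

end Bernoulli

lemma exp_mul_one_sub_pow_le {x : ℝ} (hx : x ≤ 1) (y : ℝ) (T : ℕ) :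
    exp y * (1 - x) ^ T ≤ exp (y - x * T) := by
  calc exp y * (1 - x) ^ T ≤ exp y * exp (-x) ^ T := by
        gcongr
        linarith [add_one_le_exp (-x)]
    _ = exp (y - x * T) := by rw [← exp_nat_mul, ← exp_add]; ring_nf

theorem exists_isDisjunct_of_choose_mul_exp_lt_one {n d u z T : ℕ} {p : ℝ} (hp0 : 0 ≤ p)
    (hp1 : p ≤ 1) (h : (n.choose (d + u) * (d + u).choose u : ℝ) *
      exp (z - (1 - exp (-1)) * (p ^ u * (1 - p) ^ d * T)) < 1) :
    ∃ M : Fin T → Fin n → Bool, IsDisjunct M d u z := by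
  -- the pair `(S₁, S₂)` is indexed by `⟨S₁ ∪ S₂, S₂⟩`
  set s := (univ.powersetCard (d + u)).sigma fun S : Finset (Fin n) => S.powersetCard u
  set q := p ^ u * (1 - p) ^ d
  have hq1 : (1 - exp (-1)) * q ≤ 1 :=
    mul_le_one₀ (by linarith [exp_pos (-1)]) (by positivity)
      (mul_le_one₀ (pow_le_one₀ hp0 hp1) (pow_nonneg (by linarith) _)
        (pow_le_one₀ (by linarith) (by linarith)))
  have hs : (#s : ℝ) = n.choose (d + u) * (d + u).choose u := by
    rw [card_sigma, sum_congr rfl fun S hS => by rw [card_powersetCard, (mem_powersetCard.1 hS).2]]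
    simp
  have hpair : ∀ P ∈ s, ∑ M : Fin T → Fin n → Bool, (∏ i, bernoulliWeight p (M i)) *
      exp (z - #{i | M i ∈ patternSet (P.1 \ P.2) P.2}) ≤ exp (z - (1 - exp (-1)) * (q * T)) := by
    intro P hP
    obtain ⟨hP₁, hP₂, hP₂u⟩ : #P.1 = d + u ∧ P.2 ⊆ P.1 ∧ #P.2 = u := by
      simpa [s, mem_powersetCard] using hP
    have hcard : #(P.1 \ P.2) = d := by rw [card_sdiff_of_subset hP₂]; omega
    rw [sum_prod_bernoulliWeight_mul_exp_sub_card,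
      sum_bernoulliWeight_patternSet p sdiff_disjoint, hcard, hP₂u]
    simpa only [mul_assoc] using exp_mul_one_sub_pow_le hq1 (z : ℝ) T
  obtain ⟨M, hM⟩ := exists_forall_lt_one_of_sum_lt
    (w := fun M : Fin T → Fin n → Bool => ∏ i, bernoulliWeight p (M i))
    (f := fun (P : Σ _ : Finset (Fin n), Finset (Fin n)) M =>
      exp (z - #{i | M i ∈ patternSet (P.1 \ P.2) P.2}))
    (fun M => prod_nonneg fun i _ => bernoulliWeight_nonneg hp0 hp1 (M i))
    (fun _ _ _ => (exp_pos _).le) <| by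
      calc _ ≤ ∑ _P ∈ s, exp (z - (1 - exp (-1)) * (q * T)) := sum_le_sum hpair
        _ < 1 := by rwa [sum_const, nsmul_eq_mul, hs]
        _ = _ := by rw [← Fintype.sum_pow, sum_bernoulliWeight, one_pow]
  refine ⟨M, fun S₁ S₂ hdisj h₁ h₂ => ?_⟩
  have hlt := hM ⟨S₁ ∪ S₂, S₂⟩ (by simp [s, mem_powersetCard, card_union_of_disjoint hdisj, h₁, h₂])
  simp only [union_sdiff_cancel_right hdisj, exp_lt_one_iff, sub_neg, Nat.cast_lt] at hlt
  simpa [patternSet] using hlt.le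

lemma choose_le_exp_one_mul_div_pow (N j : ℕ) : (N.choose j : ℝ) ≤ (exp 1 * N / j) ^ j := by
  rcases j.eq_zero_or_pos with rfl | hj
  · simp
  have hj' : (0 : ℝ) < j := by exact_mod_cast hj
  calc (N.choose j : ℝ) ≤ N ^ j / j.factorial := Nat.choose_le_pow_div j N
    _ = N ^ j / j ^ j * (j ^ j / j.factorial) := by field_simp
    _ ≤ N ^ j / j ^ j * exp j := by gcongr; exact pow_div_factorial_le_exp _ hj'.le j
    _ = (exp 1 * N / j) ^ j := by rw [← exp_one_pow]; ring

lemma exp_natCast_mul_log {y : ℝ} (hy : 0 < y) (m : ℕ) : exp (m * log y) = y ^ m := by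
  rw [← log_pow, exp_log (pow_pos hy m)]

lemma choose_mul_choose_le_exp_alphaTGT {n d u : ℕ} (hu : 0 < u) (hkn : d + u ≤ n) :
    (n.choose (d + u) * (d + u).choose u : ℝ) ≤ exp (alphaTGT n d u) := by
  have hu' : (0 : ℝ) < u := by exact_mod_cast hu
  have hn : (0 : ℝ) < n := by exact_mod_cast (show 0 < n by omega)
  have h₁ := choose_le_exp_one_mul_div_pow n (d + u)
  have h₂ := choose_le_exp_one_mul_div_pow (d + u) u
  have e₁ := exp_natCast_mul_log (y := exp 1 * n / (d + u))
    (div_pos (mul_pos (exp_pos 1) hn) (by positivity)) (d + u)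
  have e₂ := exp_natCast_mul_log (y := exp 1 * (d + u) / u) (by positivity) u
  push_cast at h₁ h₂ e₁
  rw [alphaTGT, exp_add, e₁, e₂]
  exact mul_le_mul h₁ h₂ (Nat.cast_nonneg _) (by positivity)

lemma le_mul_log_exp_one_mul_div {a b : ℝ} (ha : 0 < a) (hab : a ≤ b) :
    a ≤ a * log (exp 1 * b / a) := by
  have : 1 ≤ log (exp 1 * b / a) := by
    rw [le_log_iff_exp_le (div_pos (mul_pos (exp_pos 1) (ha.trans_le hab)) ha), le_div_iff₀ ha]
    nlinarith [exp_pos 1]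
  nlinarith

lemma add_two_mul_le_alphaTGT {n d u : ℕ} (hu : 0 < u) (hkn : d + u ≤ n) :
    (d : ℝ) + 2 * u ≤ alphaTGT n d u := by
  have hu' : (0 : ℝ) < u := by exact_mod_cast hu
  have hkn' : (d : ℝ) + u ≤ n := by exact_mod_cast hkn
  have h₁ := le_mul_log_exp_one_mul_div (a := d + u) (by positivity) hkn'
  have h₂ := le_mul_log_exp_one_mul_div (a := u) hu' (b := d + u) (by simp)
  rw [alphaTGT]
  linarith

lemma choose_mul_choose_mul_exp_lt_one {n d u z : ℕ} {x : ℝ} (hu : 0 < u) (hkn : d + u ≤ n)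
    (hx : 3 * alphaTGT n d u + 4 * z - 1 < x) :
    (n.choose (d + u) * (d + u).choose u : ℝ) * exp (z - (1 - exp (-1)) * x) < 1 := by
  have hα := add_two_mul_le_alphaTGT hu hkn
  have hu' : (1 : ℝ) ≤ u := by exact_mod_cast hu
  have hx0 : 0 < x := by linarith [Nat.cast_nonneg (α := ℝ) z, Nat.cast_nonneg (α := ℝ) d]
  have hhalf : x / 2 < (1 - exp (-1)) * x := by nlinarith [exp_neg_one_lt_half]
  calc _ ≤ exp (alphaTGT n d u) * exp (z - (1 - exp (-1)) * x) := by
        gcongr; exact choose_mul_choose_le_exp_alphaTGT hu hkn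
    _ = exp (alphaTGT n d u + z - (1 - exp (-1)) * x) := by rw [← exp_add]; ring_nf
    _ < 1 := by
        rw [exp_lt_one_iff]
        linarith [Nat.cast_nonneg (α := ℝ) d]

lemma sub_one_lt_inv_mul_floor_mul {Q B : ℝ} (hB : 1 ≤ B) : Q - 1 < B⁻¹ * ⌊Q * B⌋₊ := by
  have hB0 : 0 < B := by linarith
  have hB1 : B⁻¹ ≤ 1 := inv_le_one_of_one_le₀ hB
  calc Q - 1 ≤ B⁻¹ * (Q * B) - B⁻¹ := by field_simp; linarith
    _ < B⁻¹ * ⌊Q * B⌋₊ := by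
      nlinarith [mul_lt_mul_of_pos_left (Nat.lt_floor_add_one (Q * B)) (inv_pos.2 hB0)]

lemma pow_mul_one_sub_pow_eq_inv {d u : ℕ} (hdu : 0 < d + u) :
    ((u : ℝ) / (d + u)) ^ u * (1 - u / (d + u)) ^ d
      = ((((d : ℝ) + u) / u) ^ u * (((d : ℝ) + u) / d) ^ d)⁻¹ := by
  rw [one_sub_div (by norm_cast; omega), add_sub_cancel_right, mul_inv, ← inv_pow, ← inv_pow,
    inv_div, inv_div]

theorem exists_disjunct_matrix_improved_general
    (d u z n : ℕ) (hu : 2 ≤ u) (hud : u ≤ d) (hkn : d + u ≤ n) :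
    ∃ (h : ℕ) (M : Fin h → Fin n → Bool), IsDisjunct M d u z ∧
      (h : ℝ) ≤ 3 * (1 + 4 * (z : ℝ) / (3 * alphaTGT n d u)) *
        (((d : ℝ) + u) / u) ^ u * (((d : ℝ) + u) / d) ^ d * alphaTGT n d u := by
  have hu0 : (0 : ℝ) < u := by exact_mod_cast (show 0 < u by omega)
  have hd0 : (0 : ℝ) < d := by exact_mod_cast (show 0 < d by omega)
  have hα := add_two_mul_le_alphaTGT (show 0 < u by omega) hkn
  set B : ℝ := (((d : ℝ) + u) / u) ^ u * (((d : ℝ) + u) / d) ^ d with hB_def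
  have hB : 1 ≤ B := one_le_mul_of_one_le_of_one_le
    (one_le_pow₀ ((one_le_div hu0).2 (by linarith)))
    (one_le_pow₀ ((one_le_div hd0).2 (by linarith)))
  obtain ⟨M, hM⟩ := exists_isDisjunct_of_choose_mul_exp_lt_one (d := d) (u := u) (z := z)
    (T := ⌊(3 * alphaTGT n d u + 4 * z) * B⌋₊) (p := u / (d + u)) (by positivity)
    (div_le_one_of_le₀ (by linarith) (by positivity)) <| by
      rw [pow_mul_one_sub_pow_eq_inv (by omega)]
      exact choose_mul_choose_mul_exp_lt_one (by omega) hkn (sub_one_lt_inv_mul_floor_mul hB)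
  refine ⟨_, M, hM, (Nat.floor_le ?_).trans_eq ?_⟩
  · exact mul_nonneg (by linarith [Nat.cast_nonneg (α := ℝ) z]) (by linarith)
  · rw [hB_def]
    field_simp [hd0.ne', (show 0 < alphaTGT n d u by linarith).ne']

theorem exists_disjunct_matrix_improved
    (d u z n : ℕ) (hu : 2 ≤ u) (hud : u ≤ d) (hkn : d + u ≤ n)
    (hn : ((d : ℝ) + u) ^ 2 / u ≤ n) (hz : 0 < z) :
    ∃ (h : ℕ) (M : Fin h → Fin n → Bool), IsDisjunct M d u z ∧
      (h : ℝ) ≤ 3 * (1 + 4 * (z : ℝ) / (3 * alphaTGT n d u)) *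
        (((d : ℝ) + u) / u) ^ u * (((d : ℝ) + u) / d) ^ d * alphaTGT n d u :=
  exists_disjunct_matrix_improved_general d u z n hu hud hkn
end

section
/- For integers d ≥ u + 1 ≥ 3 and ℓ with 0 ≤ ℓ ≤ u − 2, it holds that d + u ≤ 2·(1 + (d−ℓ)/u)^(u/2) · (1 + u/(d−ℓ))^((d−ℓ)/2). -/
/-!
Bernoulli's inequality with exponent `b / 2 ≥ 1` gives `1 + a / 2 ≤ (1 + a / b) ^ (b / 2)`, so with
`m = d - ℓ` the right-hand side is at least `2 (1 + m / 2) (1 + u / 2) = (m + 2) (u + 2) / 2`, and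
this exceeds `d + u = m + ℓ + u` because `m u ≥ 2 u ≥ 2 ℓ + 4`.
-/

theorem one_add_half_le_one_add_div_rpow_half {a b : ℝ} (ha : 0 ≤ a) (hb : 2 ≤ b) :
    1 + a / 2 ≤ (1 + a / b) ^ (b / 2) := by
  have hab : b / 2 * (a / b) = a / 2 := by field_simp
  calc 1 + a / 2 = 1 + b / 2 * (a / b) := by rw [hab]
    _ ≤ (1 + a / b) ^ (b / 2) :=
      one_add_mul_self_le_rpow_one_add (by linarith [div_nonneg ha (by linarith : (0 : ℝ) ≤ b)])
        (by linarith)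

theorem one_add_half_mul_one_add_half_le {a b : ℝ} (ha : 2 ≤ a) (hb : 2 ≤ b) :
    (1 + a / 2) * (1 + b / 2) ≤ (1 + a / b) ^ (b / 2) * (1 + b / a) ^ (a / 2) :=
  mul_le_mul (one_add_half_le_one_add_div_rpow_half (by linarith) hb)
    (one_add_half_le_one_add_div_rpow_half (by linarith) ha) (by linarith)
    (Real.rpow_nonneg (by positivity) _)

theorem sum_le_double_pow_general (d u ℓ : ℕ) (hd : u + 1 ≤ d) (hℓ : ℓ + 2 ≤ u) :
    (d : ℝ) + u ≤
      2 * (1 + ((d : ℝ) - ℓ) / u) ^ ((u : ℝ) / 2) *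
        (1 + (u : ℝ) / ((d : ℝ) - ℓ)) ^ (((d : ℝ) - ℓ) / 2) := by
  have hd' : (u : ℝ) + 1 ≤ d := by exact_mod_cast hd
  have hℓ' : (ℓ : ℝ) + 2 ≤ u := by exact_mod_cast hℓ
  have hu : (2 : ℝ) ≤ u := by linarith [ℓ.cast_nonneg (α := ℝ)]
  have hm : (2 : ℝ) ≤ d - ℓ := by linarith
  calc (d : ℝ) + u ≤ 2 * ((1 + ((d : ℝ) - ℓ) / 2) * (1 + (u : ℝ) / 2)) := by
        nlinarith [mul_nonneg (by linarith : (0 : ℝ) ≤ d - ℓ - 2) (by linarith : (0 : ℝ) ≤ u)]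
    _ ≤ 2 * ((1 + ((d : ℝ) - ℓ) / u) ^ ((u : ℝ) / 2) *
          (1 + (u : ℝ) / ((d : ℝ) - ℓ)) ^ (((d : ℝ) - ℓ) / 2)) :=
        mul_le_mul_of_nonneg_left (one_add_half_mul_one_add_half_le hm hu) zero_le_two
    _ = _ := (mul_assoc _ _ _).symm

/-- For integers `d ≥ u + 1 ≥ 3` and `0 ≤ ℓ ≤ u - 2`:
`d + u ≤ 2·(1 + (d-ℓ)/u)^(u/2)·(1 + u/(d-ℓ))^((d-ℓ)/2)`. -/
theorem sum_le_double_pow (d u ℓ : ℕ) (hu : 2 ≤ u) (hd : u + 1 ≤ d) (hℓ : ℓ + 2 ≤ u) :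
    (d : ℝ) + u ≤
      2 * (1 + ((d : ℝ) - ℓ) / u) ^ ((u : ℝ) / 2) *
        (1 + (u : ℝ) / ((d : ℝ) - ℓ)) ^ (((d : ℝ) - ℓ) / 2) :=
  sum_le_double_pow_general d u ℓ hd hℓ
end

section
/- Let u ≥ 2 be an integer, d = 2u, g = u − 1, and n ≥ 8(2u−1)/(8−√7). Then (d−u) · C(n−u, g+1) · C(d−1, g) · C(d, u) > C(n, u). That is, u · C(n−u, u) · C(2u−1, u−1) · C(2u, u) > C(n, u). -/
open Finset

private lemma aux_pow : ∀ u : ℕ, 2 ≤ u → 64 * u ^ 2 < 28 ^ u := by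
  intro u
  induction u with
  | zero => omega
  | succ n ih =>
    intro h
    rcases Nat.lt_or_ge n 2 with h2 | h2
    · interval_cases n
      · omega
      · norm_num
    · have hih := ih h2
      have hn1 : 1 ≤ n := by omega
      calc 64 * (n + 1) ^ 2 ≤ 4 * (64 * n ^ 2) := by nlinarith
        _ < 4 * 28 ^ n := by omega
        _ ≤ 28 ^ (n + 1) := by
            rw [pow_succ]
            nlinarith [Nat.zero_le (28 ^ n)]

/-- With `u ≥ 2`, `d = 2u`, `g = u - 1` and `n ≥ 8(2u-1)/(8-√7)`:
`(d-u)·C(n-u, g+1)·C(d-1, g)·C(d, u) > C(n, u)`, i.e.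
`u·C(n-u, u)·C(2u-1, u-1)·C(2u, u) > C(n, u)`. -/
theorem dropped_term_exceeds_choose (u d g n : ℕ) (hu : 2 ≤ u)
    (hd : d = 2 * u) (hg : g = u - 1)
    (hn : 8 * (2 * (u : ℝ) - 1) / (8 - Real.sqrt 7) ≤ (n : ℝ)) :
    n.choose u < (d - u) * (n - u).choose (g + 1) * (d - 1).choose g * d.choose u := by
  subst hd hg
  rw [show 2 * u - u = u from by omega, show u - 1 + 1 = u from by omega]
  set B := (2 * u - 1).choose (u - 1) with hB
  set C := (2 * u).choose u with hC
  -- basic real facts about sqrt 7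
  set s := Real.sqrt 7 with hs
  have hs_sq : s ^ 2 = 7 := Real.sq_sqrt (by norm_num)
  have hs_nonneg : 0 ≤ s := Real.sqrt_nonneg 7
  have hs3 : s < 3 := by nlinarith
  have hs2 : 2 ≤ s := by nlinarith
  have hpos : (0 : ℝ) < 8 - s := by linarith
  have hu' : (2 : ℝ) ≤ (u : ℝ) := by exact_mod_cast hu
  have hmul : 8 * (2 * (u : ℝ) - 1) ≤ (n : ℝ) * (8 - s) := by
    rw [div_le_iff₀ hpos] at hn
    linarith
  -- n ≥ 2u
  have hn2u : 2 * u ≤ n := by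
    have : (2 * u : ℝ) ≤ (n : ℝ) := by nlinarith
    exact_mod_cast this
  have hn2u1 : 2 * u - 1 ≤ n := by omega
  -- key real inequality
  have hkey : s * (n : ℝ) ≤ 8 * ((n : ℝ) - (2 * (u : ℝ) - 1)) := by nlinarith
  have hsq : 7 * (n : ℝ) ^ 2 ≤ 64 * ((n : ℝ) - (2 * (u : ℝ) - 1)) ^ 2 := by
    have h0 : 0 ≤ s * (n : ℝ) := by positivity
    have := pow_le_pow_left₀ h0 hkey 2
    calc 7 * (n : ℝ) ^ 2 = (s * (n : ℝ)) ^ 2 := by rw [mul_pow, hs_sq]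
      _ ≤ (8 * ((n : ℝ) - (2 * (u : ℝ) - 1))) ^ 2 := this
      _ = 64 * ((n : ℝ) - (2 * (u : ℝ) - 1)) ^ 2 := by ring
  -- key nat inequality
  have hcast : ((n - (2 * u - 1) : ℕ) : ℝ) = (n : ℝ) - (2 * (u : ℝ) - 1) := by
    push_cast [Nat.cast_sub hn2u1]
    have : ((2 * u - 1 : ℕ) : ℝ) = 2 * (u : ℝ) - 1 := by
      push_cast [Nat.cast_sub (show 1 ≤ 2 * u by omega)]
      ring
    rw [this]
  have hnat : 7 * n ^ 2 ≤ 64 * (n - (2 * u - 1)) ^ 2 := by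
    have : (7 : ℝ) * (n : ℝ) ^ 2 ≤ 64 * ((n - (2 * u - 1) : ℕ) : ℝ) ^ 2 := by
      rw [hcast]; exact hsq
    exact_mod_cast this
  -- pointwise inequality
  have hpt : ∀ i ∈ range u, 7 * (n - i) ^ 2 ≤ 64 * (n - u - i) ^ 2 := by
    intro i hi
    rw [mem_range] at hi
    have h1 : n - i ≤ n := Nat.sub_le _ _
    have h2 : n - (2 * u - 1) ≤ n - u - i := by omega
    calc 7 * (n - i) ^ 2 ≤ 7 * n ^ 2 := by
          exact Nat.mul_le_mul_left _ (Nat.pow_le_pow_left h1 2)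
      _ ≤ 64 * (n - (2 * u - 1)) ^ 2 := hnat
      _ ≤ 64 * (n - u - i) ^ 2 := Nat.mul_le_mul_left _ (Nat.pow_le_pow_left h2 2)
  -- product inequality for descending factorials
  have hprod : 7 ^ u * (n.descFactorial u) ^ 2 ≤ 64 ^ u * ((n - u).descFactorial u) ^ 2 := by
    rw [Nat.descFactorial_eq_prod_range, Nat.descFactorial_eq_prod_range]
    calc 7 ^ u * (∏ i ∈ range u, (n - i)) ^ 2 = ∏ i ∈ range u, 7 * (n - i) ^ 2 := by
          rw [prod_mul_distrib, prod_const, card_range, prod_pow]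
      _ ≤ ∏ i ∈ range u, 64 * (n - u - i) ^ 2 := Finset.prod_le_prod' hpt
      _ = 64 ^ u * (∏ i ∈ range u, (n - u - i)) ^ 2 := by
          rw [prod_mul_distrib, prod_const, card_range, prod_pow]
  -- binomial cross identity
  have hcross : n.choose u * (n - u).descFactorial u = (n - u).choose u * n.descFactorial u := by
    rw [Nat.descFactorial_eq_factorial_mul_choose, Nat.descFactorial_eq_factorial_mul_choose]
    ring
  -- C(2u,u) = 2 * C(2u-1,u-1)
  have hC2B : C = 2 * B := by
    have h1 : (2 * u - 1).choose u = B := by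
      rw [hB, ← Nat.choose_symm (show u ≤ 2 * u - 1 by omega)]
      congr 1
      omega
    have h2 : (2 * u).choose u = (2 * u - 1).choose (u - 1) + (2 * u - 1).choose (u - 1 + 1) := by
      rw [show 2 * u = (2 * u - 1) + 1 from by omega]
      rw [show u = (u - 1) + 1 from by omega]
      exact Nat.choose_succ_succ _ _
    rw [hC, h2, show u - 1 + 1 = u from by omega, h1, hB]
    ring
  -- central binomial lower bound
  have h4C : 4 ^ u ≤ 2 * u * C := by
    have := Nat.four_pow_le_two_mul_self_mul_centralBinom u (by omega)
    simpa [Nat.centralBinom, hC] using this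
  set K := u * B * C with hKdef
  have hKsq : K ^ 2 = 4 * u ^ 2 * B ^ 4 := by rw [hKdef, hC2B]; ring
  -- 64^u < 7^u * K^2
  have hmain : 64 ^ u < 7 ^ u * K ^ 2 := by
    have h1 : 64 * u ^ 2 * 64 ^ u < 64 * u ^ 2 * (7 ^ u * K ^ 2) := by
      calc 64 * u ^ 2 * 64 ^ u < 28 ^ u * 64 ^ u :=
            (Nat.mul_lt_mul_right (pow_pos (by norm_num) u)).mpr (aux_pow u hu)
        _ = 7 ^ u * 256 ^ u := by
            rw [← Nat.mul_pow, ← Nat.mul_pow]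
        _ ≤ 7 ^ u * (2 * u * C) ^ 4 := by
            refine Nat.mul_le_mul_left _ ?_
            calc 256 ^ u = (4 ^ u) ^ 4 := by
                  rw [show (256 : ℕ) = 4 ^ 4 by norm_num, ← pow_mul, ← pow_mul, Nat.mul_comm]
              _ ≤ (2 * u * C) ^ 4 := Nat.pow_le_pow_left h4C 4
        _ = 64 * u ^ 2 * (7 ^ u * K ^ 2) := by rw [hKsq, hC2B]; ring
    exact Nat.lt_of_mul_lt_mul_left h1
  -- positivity facts
  have hDpos : 0 < (n - u).descFactorial u := by
    rw [Nat.pos_iff_ne_zero, Ne, Nat.descFactorial_eq_zero_iff_lt]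
    omega
  have hC'pos : 0 < (n - u).choose u := Nat.choose_pos (by omega)
  -- main chain
  have hfinal : (n.choose u) ^ 2 < (K * (n - u).choose u) ^ 2 := by
    have hP : 0 < 7 ^ u * ((n - u).descFactorial u) ^ 2 := by positivity
    refine Nat.lt_of_mul_lt_mul_left (a := 7 ^ u * ((n - u).descFactorial u) ^ 2) ?_
    calc 7 ^ u * ((n - u).descFactorial u) ^ 2 * (n.choose u) ^ 2
        = 7 ^ u * (n.choose u * (n - u).descFactorial u) ^ 2 := by ring
      _ = 7 ^ u * ((n - u).choose u * n.descFactorial u) ^ 2 := by rw [hcross]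
      _ = ((n - u).choose u) ^ 2 * (7 ^ u * (n.descFactorial u) ^ 2) := by ring
      _ ≤ ((n - u).choose u) ^ 2 * (64 ^ u * ((n - u).descFactorial u) ^ 2) :=
          Nat.mul_le_mul le_rfl hprod
      _ < ((n - u).choose u) ^ 2 * (7 ^ u * K ^ 2 * ((n - u).descFactorial u) ^ 2) := by
          refine (Nat.mul_lt_mul_left (pow_pos hC'pos 2)).mpr ?_
          exact (Nat.mul_lt_mul_right (pow_pos hDpos 2)).mpr hmain
      _ = 7 ^ u * ((n - u).descFactorial u) ^ 2 * (K * (n - u).choose u) ^ 2 := by ring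
  have hXY : n.choose u < K * (n - u).choose u := by
    by_contra hle
    push_neg at hle
    exact absurd hfinal (not_lt.mpr (Nat.pow_le_pow_left hle 2))
  calc n.choose u < K * (n - u).choose u := hXY
    _ = u * (n - u).choose u * B * C := by ring
end

section
/- For integer u ≥ 2 and integer n ≥ 8(2u−1)/(8−√7), the inequality (n − 2u + 1)^u · 16^u / (7(u+2)) ≥ n^u holds. -/
/-! Since `(2√7)² = 28 = 4·7` and `2√7 ≥ 5/4`, induction gives `7(u+2) ≤ (2√7)^u` for `u ≥ 2`.
The bound on `n` is exactly `2√7·n ≤ 16(n - 2u + 1)`, so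
`n^u · 7(u+2) ≤ (2√7·n)^u ≤ 16^u (n - 2u + 1)^u`. -/

theorem mul_add_two_le_pow {a c : ℝ} (hc : 0 ≤ c) (ha : 5 / 4 ≤ a) (hca : 4 * c ≤ a ^ 2)
    {u : ℕ} (hu : 2 ≤ u) : c * (u + 2) ≤ a ^ u := by
  induction u, hu using Nat.le_induction with
  | base => push_cast; linarith
  | succ u hu ih =>
    have hu' : (2 : ℝ) ≤ u := by exact_mod_cast hu
    calc c * ((u + 1 : ℕ) + 2) = c * (u + 3) := by push_cast; ring
      _ ≤ c * ((u + 2) * (5 / 4)) := by gcongr; linarith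
      _ ≤ c * (u + 2) * a := by rw [← mul_assoc]; gcongr
      _ ≤ a ^ u * a := by gcongr
      _ = a ^ (u + 1) := (pow_succ a u).symm

theorem seven_mul_add_two_le_two_mul_sqrt_seven_pow {u : ℕ} (hu : 2 ≤ u) :
    7 * ((u : ℝ) + 2) ≤ (2 * √7) ^ u := by
  have h7 : (2.5 : ℝ) ≤ √7 := Real.le_sqrt_of_sq_le (by norm_num)
  refine mul_add_two_le_pow (by norm_num) (by linarith) ?_ hu
  rw [mul_pow, Real.sq_sqrt (by norm_num)]
  norm_num

/-- For integers `u ≥ 2` and `n ≥ 8(2u-1)/(8-√7)`: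
`(n - 2u + 1)^u · 16^u / (7(u+2)) ≥ n^u`. -/
theorem shifted_pow_ge (u n : ℕ) (hu : 2 ≤ u)
    (hn : 8 * (2 * (u : ℝ) - 1) / (8 - Real.sqrt 7) ≤ (n : ℝ)) :
    (n : ℝ) ^ u ≤ ((n : ℝ) - 2 * u + 1) ^ u * 16 ^ u / (7 * ((u : ℝ) + 2)) := by
  have h7 : √7 < 8 := (Real.sqrt_lt' (by norm_num)).2 (by norm_num)
  rw [div_le_iff₀ (by linarith)] at hn
  have hlin : 2 * √7 * n ≤ 16 * ((n : ℝ) - 2 * u + 1) := by linarith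
  rw [le_div_iff₀ (by positivity)]
  calc (n : ℝ) ^ u * (7 * ((u : ℝ) + 2)) ≤ (n : ℝ) ^ u * (2 * √7) ^ u := by
        gcongr; exact seven_mul_add_two_le_two_mul_sqrt_seven_pow hu
    _ = (2 * √7 * n) ^ u := by rw [← mul_pow, mul_comm]
    _ ≤ (16 * ((n : ℝ) - 2 * u + 1)) ^ u := by gcongr
    _ = ((n : ℝ) - 2 * u + 1) ^ u * 16 ^ u := by rw [mul_pow, mul_comm]
end

section
/- Let S be a finite defective set in [n], let 0 ≤ ℓ < u with g = u − ℓ − 1 > 0, and let F be a family of u-subsets of [n] such that (i) every X ∈ F satisfies |X ∩ S| ≥ ℓ + 1, and (ii) every u-subset of S belongs to F. If S' ⊆ [n] is a union of u-subsets built by first greedily adding pairwise disjoint members of F until no member of F is disjoint from the current union, and then adding members A of F with |S' ∪ A| ≥ |S'| + g + 1 until none exists, then the final S' satisfies |S \ S'| ≤ g and |S' \ S| ≤ (⌊|S|/(ℓ+1)⌋ + u − 1) · g. -/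
/-!
Every member of `F` has at most `g` points outside `S`, so `|S' \ S|` is at most `g` times the
number of picked sets. Phase 1 picks pairwise disjoint sets, each meeting `S` in at least
`ℓ + 1` points, hence at most `⌊|S|/(ℓ+1)⌋` of them; when it stops, fewer than `u` points of `S`
are uncovered, for otherwise any `u` of them would form a member of `F` disjoint from the union.
Each phase-2 set adds `g + 1` new points, at most `g` of them outside `S`, so it covers a new
point of `S`: phase 2 takes at most `u - 1` steps. Finally, if `g + 1` points of `S` were left
uncovered, a `u`-subset of `S` containing them would still be eligible in phase 2.
-/

def listUnion {α : Type*} [DecidableEq α] (L : List (Finset α)) : Finset α :=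
  L.foldr (· ∪ ·) ∅

section ListUnion

open Finset

variable {α : Type*} [DecidableEq α]

@[simp]
lemma listUnion_nil : listUnion ([] : List (Finset α)) = ∅ := rfl

@[simp]
lemma listUnion_cons (A : Finset α) (L : List (Finset α)) :
    listUnion (A :: L) = A ∪ listUnion L := rfl

@[simp]
lemma listUnion_append (L M : List (Finset α)) :
    listUnion (L ++ M) = listUnion L ∪ listUnion M := by
  induction L with
  | nil => simp
  | cons A L ih => simp [ih, union_assoc]

lemma subset_listUnion {L : List (Finset α)} {A : Finset α} (h : A ∈ L) :
    A ⊆ listUnion L := by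
  induction L with
  | nil => cases h
  | cons B L ih =>
    rcases List.mem_cons.1 h with rfl | h
    · exact subset_union_left
    · exact (ih h).trans subset_union_right

lemma disjoint_listUnion_right {A : Finset α} {L : List (Finset α)} :
    Disjoint A (listUnion L) ↔ ∀ B ∈ L, Disjoint A B := by
  induction L with
  | nil => simp
  | cons B L ih => simp [disjoint_union_right, ih]

lemma card_listUnion_sdiff_le {L : List (Finset α)} {S : Finset α} {g : ℕ}
    (h : ∀ A ∈ L, #(A \ S) ≤ g) : #(listUnion L \ S) ≤ L.length * g := by
  induction L with
  | nil => simp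
  | cons A L ih =>
    rw [List.forall_mem_cons] at h
    calc #((A ∪ listUnion L) \ S) ≤ #(A \ S) + #(listUnion L \ S) := by
          rw [union_sdiff_distrib]; exact card_union_le _ _
      _ ≤ g + L.length * g := add_le_add h.1 (ih h.2)
      _ = (A :: L).length * g := by rw [List.length_cons]; ring

lemma length_mul_le_card_inter_listUnion {L : List (Finset α)} {S : Finset α} {k : ℕ}
    (hL : L.Pairwise Disjoint) (hk : ∀ A ∈ L, k ≤ #(A ∩ S)) :
    L.length * k ≤ #(listUnion L ∩ S) := by
  induction L with
  | nil => simp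
  | cons A L ih =>
    rw [List.pairwise_cons] at hL
    rw [List.forall_mem_cons] at hk
    have hdisj : Disjoint (A ∩ S) (listUnion L ∩ S) :=
      (disjoint_listUnion_right.2 hL.1).mono inter_subset_left inter_subset_left
    calc (A :: L).length * k = k + L.length * k := by rw [List.length_cons]; ring
      _ ≤ #(A ∩ S) + #(listUnion L ∩ S) := add_le_add hk.1 (ih hL.2 hk.2)
      _ = #((A ∪ listUnion L) ∩ S) := by
          rw [union_inter_distrib_right, card_union_of_disjoint hdisj]

lemma card_inter_add_one_le {W A S : Finset α} {g : ℕ} (hgain : #W + g + 1 ≤ #(W ∪ A))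
    (hA : #(A \ S) ≤ g) : #(W ∩ S) + 1 ≤ #((W ∪ A) ∩ S) := by
  have hW := card_sdiff_add_card_inter W S
  have hWA := card_sdiff_add_card_inter (W ∪ A) S
  have hout : #((W ∪ A) \ S) ≤ #(W \ S) + #(A \ S) := by
    rw [union_sdiff_distrib]; exact card_union_le _ _
  omega

lemma card_inter_add_length_le {S : Finset α} {g : ℕ} (L : List (Finset α)) (W : Finset α)
    (hgain : ∀ pre A post, L = pre ++ A :: post →
      #(W ∪ listUnion pre) + g + 1 ≤ #(W ∪ listUnion pre ∪ A))
    (hL : ∀ A ∈ L, #(A \ S) ≤ g) :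
    #(W ∩ S) + L.length ≤ #((W ∪ listUnion L) ∩ S) := by
  induction L generalizing W with
  | nil => simp
  | cons A L ih =>
    rw [List.forall_mem_cons] at hL
    have hstep : #(W ∩ S) + 1 ≤ #((W ∪ A) ∩ S) :=
      card_inter_add_one_le (by simpa using hgain [] A L rfl) hL.1
    have hrest := ih (W ∪ A) (fun pre B post h => by
      simpa [union_assoc] using hgain (A :: pre) B post (by rw [h, List.cons_append])) hL.2
    rw [listUnion_cons, ← union_assoc, List.length_cons]
    omega

lemma card_sdiff_le_of_forall_card_union_lt {S U : Finset α} {u g : ℕ} (hgu : g + 1 ≤ u)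
    (hSu : u ≤ #S) (h : ∀ A ⊆ S, #A = u → #(U ∪ A) < #U + g + 1) : #(S \ U) ≤ g := by
  by_contra! hlt
  obtain ⟨B, hBSU, hB⟩ := exists_subset_card_eq (show g + 1 ≤ #(S \ U) from hlt)
  obtain ⟨A, hBA, hAS, hA⟩ :=
    exists_subsuperset_card_eq (hBSU.trans sdiff_subset) (hB ▸ hgu) hSu
  have hnew : #B ≤ #(A \ U) :=
    card_le_card fun x hx => mem_sdiff.2 ⟨hBA hx, (mem_sdiff.1 (hBSU hx)).2⟩
  have hunion : #(A \ U) + #U = #(A ∪ U) := card_sdiff_add_card _ _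
  have := h A hAS hA
  rw [union_comm] at this
  omega

lemma card_sdiff_lt_of_forall_not_disjoint {S U : Finset α} {u : ℕ}
    (h : ∀ A ⊆ S, #A = u → ¬Disjoint A U) : #(S \ U) < u := by
  by_contra! hle
  obtain ⟨A, hA, hcard⟩ := exists_subset_card_eq hle
  exact h A (hA.trans sdiff_subset) hcard (disjoint_of_subset_left hA sdiff_disjoint)

end ListUnion

theorem greedy_two_phase_correct_general (n u ℓ g : ℕ) (S : Finset (Fin n))
    (F : Finset (Finset (Fin n)))
    (hu : u = ℓ + g + 1) (hSu : u ≤ S.card)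
    (hcard : ∀ X ∈ F, X.card = u)
    (hint : ∀ X ∈ F, ℓ + 1 ≤ (X ∩ S).card)
    (hall : ∀ X : Finset (Fin n), X ⊆ S → X.card = u → X ∈ F)
    (L1 L2 : List (Finset (Fin n)))
    (hmem : ∀ A ∈ L1 ++ L2, A ∈ F)
    (hdisj : L1.Pairwise (fun A B => Disjoint A B))
    (hstop1 : ∀ A ∈ F, A ∉ L1 → ¬ Disjoint A (listUnion L1))
    (hphase2 : ∀ (pre : List (Finset (Fin n))) (A : Finset (Fin n))
        (post : List (Finset (Fin n))), L2 = pre ++ A :: post →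
      (listUnion (L1 ++ pre)).card + g + 1 ≤ (listUnion (L1 ++ pre) ∪ A).card)
    (hstop2 : ∀ A ∈ F, A ∉ L1 ++ L2 →
      (listUnion (L1 ++ L2) ∪ A).card < (listUnion (L1 ++ L2)).card + g + 1) :
    (S \ listUnion (L1 ++ L2)).card ≤ g ∧
    (listUnion (L1 ++ L2) \ S).card ≤ (S.card / (ℓ + 1) + u - 1) * g := by
  have hout : ∀ A ∈ L1 ++ L2, (A \ S).card ≤ g := fun A hA => by
    have := Finset.card_sdiff_add_card_inter A S
    have := hcard A (hmem A hA)
    have := hint A (hmem A hA)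
    omega
  have hcover : (S \ listUnion (L1 ++ L2)).card ≤ g := by
    refine card_sdiff_le_of_forall_card_union_lt (by omega) hSu fun A hAS hA => ?_
    by_cases hAL : A ∈ L1 ++ L2
    · rw [Finset.union_eq_left.2 (subset_listUnion hAL)]; omega
    · exact hstop2 A (hall A hAS hA) hAL
  have hphase1 : (S \ listUnion L1).card < u := by
    refine card_sdiff_lt_of_forall_not_disjoint fun A hAS hA hd => ?_
    by_cases hAL : A ∈ L1
    · have : A = ∅ := (Finset.disjoint_self_iff_empty A).1 (hd.mono_right (subset_listUnion hAL))
      rw [this, Finset.card_empty] at hA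
      omega
    · exact hstop1 A (hall A hAS hA) hAL hd
  have hL1 : L1.length * (ℓ + 1) ≤ (listUnion L1 ∩ S).card :=
    length_mul_le_card_inter_listUnion hdisj fun A hA =>
      hint A (hmem A (List.mem_append_left _ hA))
  have hL2 := card_inter_add_length_le L2 (listUnion L1)
    (fun pre A post h => by simpa using hphase2 pre A post h)
    (fun A hA => hout A (List.mem_append_right _ hA))
  have hL1S : L1.length ≤ S.card / (ℓ + 1) :=
    (Nat.le_div_iff_mul_le (by omega)).2 (hL1.trans (Finset.card_le_card Finset.inter_subset_right))
  have hL2S : L2.length < u := by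
    have := Finset.card_le_card (s := (listUnion L1 ∪ listUnion L2) ∩ S) Finset.inter_subset_right
    have := Finset.card_sdiff_add_card_inter S (listUnion L1)
    rw [Finset.inter_comm S] at this
    omega
  refine ⟨hcover, (card_listUnion_sdiff_le hout).trans (Nat.mul_le_mul_right g ?_)⟩
  rw [List.length_append]
  omega

/-- Correctness of the two-phase greedy algorithm (Algorithm 2). The sets picked in the
first phase form a list `L1` of pairwise disjoint members of `F`, and the phase stops
when no unused member of `F` is disjoint from the current union; the sets picked in the
second phase form a list `L2` of members of `F`, each adding at least `g + 1` new
elements, and the phase stops when no unused member of `F` adds `g + 1` new elements.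
The final set `S' = ⋃ (L1 ++ L2)` satisfies `|S \ S'| ≤ g` and
`|S' \ S| ≤ (⌊|S|/(ℓ+1)⌋ + u - 1)·g`. -/
theorem greedy_two_phase_correct (n u ℓ g : ℕ) (S : Finset (Fin n))
    (F : Finset (Finset (Fin n)))
    (hg : 0 < g) (hu : u = ℓ + g + 1) (hSu : u ≤ S.card)
    (hcard : ∀ X ∈ F, X.card = u)
    (hint : ∀ X ∈ F, ℓ + 1 ≤ (X ∩ S).card)
    (hall : ∀ X : Finset (Fin n), X ⊆ S → X.card = u → X ∈ F)
    (L1 L2 : List (Finset (Fin n)))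
    (hmem : ∀ A ∈ L1 ++ L2, A ∈ F)
    (hnodup : (L1 ++ L2).Nodup)
    (hL1ne : L1 ≠ [])
    (hdisj : L1.Pairwise (fun A B => Disjoint A B))
    (hstop1 : ∀ A ∈ F, A ∉ L1 → ¬ Disjoint A (listUnion L1))
    (hphase2 : ∀ (pre : List (Finset (Fin n))) (A : Finset (Fin n))
        (post : List (Finset (Fin n))), L2 = pre ++ A :: post →
      (listUnion (L1 ++ pre)).card + g + 1 ≤ (listUnion (L1 ++ pre) ∪ A).card)
    (hstop2 : ∀ A ∈ F, A ∉ L1 ++ L2 →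
      (listUnion (L1 ++ L2) ∪ A).card < (listUnion (L1 ++ L2)).card + g + 1) :
    (S \ listUnion (L1 ++ L2)).card ≤ g ∧
    (listUnion (L1 ++ L2) \ S).card ≤ (S.card / (ℓ + 1) + u - 1) * g :=
  greedy_two_phase_correct_general n u ℓ g S F hu hSu hcard hint hall L1 L2 hmem hdisj hstop1
    hphase2 hstop2
end

section
/- Under the setting of the greedy algorithm above, if |S| ≥ u and the second phase terminates with set S_m such that no unused A ∈ F satisfies |S_m ∪ A| ≥ |S_m| + g + 1, then |S \ S_m| ≤ g. -/
/-- If the second phase of the greedy algorithm stops at `Sm`, i.e. no member `A` of the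
family `F` satisfies `|Sm ∪ A| ≥ |Sm| + g + 1`, then `|S \ Sm| ≤ g`. Here `|S| ≥ u`,
`u = ℓ + g + 1`, `F` consists of `u`-subsets of `[n]` each meeting `S` in at least
`ℓ + 1` elements, and `F` contains every `u`-subset of `S`. -/
theorem second_phase_stop (n u ℓ g : ℕ) (S Sm : Finset (Fin n))
    (F : Finset (Finset (Fin n))) (hg : 0 < g) (hu : u = ℓ + g + 1)
    (hSu : u ≤ S.card)
    (hcard : ∀ X ∈ F, X.card = u)
    (hint : ∀ X ∈ F, ℓ + 1 ≤ (X ∩ S).card)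
    (hall : ∀ X : Finset (Fin n), X ⊆ S → X.card = u → X ∈ F)
    (hstop : ∀ A ∈ F, (Sm ∪ A).card < Sm.card + g + 1) :
    (S \ Sm).card ≤ g := by
  by_contra h
  push_neg at h
  have hC : ∃ C ⊆ S \ Sm, C.card = g + 1 :=
    Finset.exists_subset_card_eq h
  obtain ⟨C, hCsub, hCcard⟩ := hC
  have hSC : ℓ ≤ (S \ C).card := by
    have h1 : (S \ C).card = S.card - C.card := by
      refine Finset.card_sdiff_of_subset ?_
      exact (hCsub.trans (Finset.sdiff_subset))
    omega
  obtain ⟨D, hDsub, hDcard⟩ : ∃ D ⊆ S \ C, D.card = ℓ :=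
    Finset.exists_subset_card_eq hSC
  set A := C ∪ D with hA
  have hCS : C ⊆ S := hCsub.trans Finset.sdiff_subset
  have hAS : A ⊆ S := Finset.union_subset hCS (hDsub.trans Finset.sdiff_subset)
  have hdisj : Disjoint C D := by
    refine Finset.disjoint_left.mpr fun x hxC hxD => ?_
    exact (Finset.mem_sdiff.mp (hDsub hxD)).2 hxC
  have hAcard : A.card = u := by
    rw [hA, Finset.card_union_of_disjoint hdisj, hCcard, hDcard]; omega
  have hAF : A ∈ F := hall A hAS hAcard
  have hCSm : Disjoint C Sm := by
    refine Finset.disjoint_left.mpr fun x hxC hxS => ?_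
    exact (Finset.mem_sdiff.mp (hCsub hxC)).2 hxS
  have hbig : Sm.card + (g + 1) ≤ (Sm ∪ A).card := by
    have : Sm ∪ C ⊆ Sm ∪ A := Finset.union_subset_union_right Finset.subset_union_left
    have h2 : (Sm ∪ C).card = Sm.card + C.card :=
      Finset.card_union_of_disjoint hCSm.symm
    have := Finset.card_le_card this
    omega
  have := hstop A hAF
  omega
end

section
/- Let d ≥ u ≥ g + 1 ≥ 2, ℓ = u − g − 1, k = d − ℓ + u = d + g + 1, and let n satisfy e²(d+u)²/u ≤ n, and set s = ⌊d/(ℓ+1)⌋ + u − 1. Then u·s·(g·s + d)·C(n,u) ≤ H·u·C(n,u), where H = (1 + (d−ℓ)/u)^u · (1 + u/(d−ℓ))^(d−ℓ) · (d + g + 1) · ln(n/k). Equivalently, s·(g·s + d) ≤ H. -/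
/-!
Since `d/(ℓ+1) + (ℓ+1) ≤ d + 1`, we have `s ≤ d + g`, and then `s(gs + d)` is at most
`2(d+1)(g+2)(d+g+1)`. Bernoulli's inequality bounds the two powers in `H` below by `1 + (d-ℓ)`
and `1 + u`, whose product is at least `(d+1)(g+2)`, and `n ≥ e²k` gives `ln(n/k) ≥ 2`.
-/

theorem Nat.div_add_le_add_one {d a : ℕ} (had : a ≤ d) : d / a + a ≤ d + 1 := by
  rcases Nat.eq_zero_or_pos a with rfl | ha
  · simp
  refine Nat.le_of_mul_le_mul_right ?_ ha
  have := Nat.div_mul_le_self d a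
  nlinarith

theorem mul_mul_add_le_of_le_add {s g d : ℕ} (hs : s ≤ d + g) (hg : g ≤ d) :
    s * (g * s + d) ≤ 2 * ((d + 1) * (g + 2)) * (d + g + 1) :=
  calc s * (g * s + d) ≤ (d + g) * (g * (d + g) + d) := by gcongr
    _ ≤ 2 * (d + 1) * ((g + 2) * (d + g + 1)) := by gcongr <;> nlinarith
    _ = 2 * ((d + 1) * (g + 2)) * (d + g + 1) := by ring

theorem one_add_le_one_add_div_pow {x : ℝ} (hx : 0 ≤ x) {m : ℕ} (hm : m ≠ 0) :
    1 + x ≤ (1 + x / m) ^ m := by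
  have h := one_add_mul_le_pow (by linarith [div_nonneg hx m.cast_nonneg] : (-2 : ℝ) ≤ x / m) m
  rwa [mul_div_cancel₀ x (Nat.cast_ne_zero.mpr hm)] at h

theorem one_add_mul_one_add_le_pow_mul_pow {p q : ℕ} (hp : p ≠ 0) (hq : q ≠ 0) :
    (1 + (p : ℝ)) * (1 + q) ≤ (1 + (p : ℝ) / q) ^ q * (1 + (q : ℝ) / p) ^ p := by
  gcongr
  · exact one_add_le_one_add_div_pow p.cast_nonneg hq
  · exact one_add_le_one_add_div_pow q.cast_nonneg hp

theorem Real.two_le_log_div {n k : ℝ} (hk : 0 < k) (h : Real.exp 1 ^ 2 * k ≤ n) :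
    2 ≤ Real.log (n / k) := by
  rw [Real.le_log_iff_exp_le (div_pos (lt_of_lt_of_le (by positivity) h) hk), le_div_iff₀ hk]
  simpa [Real.exp_one_pow] using h

theorem decoding_complexity_bound_general (d u g ℓ k n s : ℕ)
    (hu : u = ℓ + g + 1) (hud : u ≤ d)
    (hk : k = d + g + 1) (hs : s = d / (ℓ + 1) + u - 1)
    (hn : Real.exp 1 ^ 2 * ((d : ℝ) + u) ^ 2 / u ≤ (n : ℝ)) :
    (s : ℝ) * ((g : ℝ) * s + d) ≤
      (1 + ((d : ℝ) - ℓ) / u) ^ u * (1 + (u : ℝ) / ((d : ℝ) - ℓ)) ^ (d - ℓ) *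
        ((d : ℝ) + g + 1) * Real.log ((n : ℝ) / k) ∧
    (u : ℝ) * s * ((g : ℝ) * s + d) * (n.choose u : ℕ) ≤
      (1 + ((d : ℝ) - ℓ) / u) ^ u * (1 + (u : ℝ) / ((d : ℝ) - ℓ)) ^ (d - ℓ) *
        ((d : ℝ) + g + 1) * Real.log ((n : ℝ) / k) * u * (n.choose u : ℕ) := by
  have huR : (u : ℝ) = ℓ + g + 1 := by rw [hu]; push_cast; ring
  have hkR : (k : ℝ) = d + g + 1 := by rw [hk]; push_cast; ring
  have hudR : (u : ℝ) ≤ d := by exact_mod_cast hud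
  have hs_le : s ≤ d + g := by
    have := Nat.div_add_le_add_one (show ℓ + 1 ≤ d by omega)
    omega
  have hsg : (s : ℝ) * (g * s + d) ≤ 2 * ((d + 1) * (g + 2)) * (d + g + 1) := by
    exact_mod_cast mul_mul_add_le_of_le_add hs_le (by omega)
  have hdl : ((d - ℓ : ℕ) : ℝ) = d - ℓ := Nat.cast_sub (by omega)
  have hpow : (1 + ((d : ℝ) - ℓ)) * (1 + u) ≤
      (1 + ((d : ℝ) - ℓ) / u) ^ u * (1 + (u : ℝ) / ((d : ℝ) - ℓ)) ^ (d - ℓ) := by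
    rw [← hdl]
    exact one_add_mul_one_add_le_pow_mul_pow (by omega) (by omega)
  have hprod : ((d : ℝ) + 1) * (g + 2) ≤ (1 + ((d : ℝ) - ℓ)) * (1 + u) := by
    -- the difference of the two sides is `ℓ(d - u)`
    rw [huR]
    nlinarith [mul_nonneg ℓ.cast_nonneg (sub_nonneg.2 hudR)]
  have hlog : 2 ≤ Real.log ((n : ℝ) / k) := by
    refine Real.two_le_log_div (by rw [hkR]; positivity) (le_trans ?_ hn)
    rw [le_div_iff₀ (by rw [huR]; positivity), mul_assoc]
    gcongr
    nlinarith
  have hA := hprod.trans hpow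
  have main : (s : ℝ) * ((g : ℝ) * s + d) ≤
      (1 + ((d : ℝ) - ℓ) / u) ^ u * (1 + (u : ℝ) / ((d : ℝ) - ℓ)) ^ (d - ℓ) *
        ((d : ℝ) + g + 1) * Real.log ((n : ℝ) / k) := by
    nlinarith [mul_le_mul hA hlog zero_le_two (le_trans (by positivity) hA)]
  refine ⟨main, ?_⟩
  have := mul_le_mul_of_nonneg_right main (by positivity : (0 : ℝ) ≤ u * (n.choose u : ℕ))
  linarith

/-- With `d ≥ u ≥ g + 1 ≥ 2`, `u = ℓ + g + 1`, `k = d - ℓ + u = d + g + 1`,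
`n ≥ e²(d+u)²/u` and `s = ⌊d/(ℓ+1)⌋ + u - 1`:
`u·s·(g·s + d)·C(n,u) ≤ H·u·C(n,u)`, equivalently `s·(g·s + d) ≤ H`, where
`H = (1 + (d-ℓ)/u)^u·(1 + u/(d-ℓ))^(d-ℓ)·(d + g + 1)·ln(n/k)`. -/
theorem decoding_complexity_bound (d u g ℓ k n s : ℕ)
    (hg : 1 ≤ g) (hu : u = ℓ + g + 1) (hud : u ≤ d)
    (hk : k = d + g + 1) (hs : s = d / (ℓ + 1) + u - 1)
    (hn : Real.exp 1 ^ 2 * ((d : ℝ) + u) ^ 2 / u ≤ (n : ℝ)) :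
    (s : ℝ) * ((g : ℝ) * s + d) ≤
      (1 + ((d : ℝ) - ℓ) / u) ^ u * (1 + (u : ℝ) / ((d : ℝ) - ℓ)) ^ (d - ℓ) *
        ((d : ℝ) + g + 1) * Real.log ((n : ℝ) / k) ∧
    (u : ℝ) * s * ((g : ℝ) * s + d) * (n.choose u : ℕ) ≤
      (1 + ((d : ℝ) - ℓ) / u) ^ u * (1 + (u : ℝ) / ((d : ℝ) - ℓ)) ^ (d - ℓ) *
        ((d : ℝ) + g + 1) * Real.log ((n : ℝ) / k) * u * (n.choose u : ℕ) :=
  decoding_complexity_bound_general d u g ℓ k n s hu hud hk hs hn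
end
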